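/- arXiv:2503.19718 — 3 statements merged into one kernel-verified Lean document; each statement's English description precedes it below -/
import Mathlib

section
/- Every permutation of a finite set of n elements can be written as a product of the transpositions (a b) with 1 ≤ a < b ≤ n, taken in the fixed lexicographic order ((1,2),(1,3),...,(1,n),(2,3),...,(n-1,n)), where each transposition in this ordered list is either included or omitted. Equivalently, the map from binary vectors x ∈ {0,1}^k (with k = n(n-1)/2) to permutations, sending x to the ordered product ∏_{i=1}^k T_i^{x_i}, is surjective onto the symmetric group S_n. -/
/-- The list of all transpositions `(a b)` with `a < b` in `S_n`, in lexicographic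
order of the pairs `(a, b)`: `(1,2),(1,3),…,(1,n),(2,3),…,(n-1,n)`. -/
def lexSwaps (n : ℕ) : List (Equiv.Perm (Fin n)) :=
  (List.finRange n).flatMap (fun a =>
    ((List.finRange n).filter (fun b => a < b)).map (fun b => Equiv.swap a b))

lemma mask_of_sublist {M : Type*} [Monoid M] {l L : List M} (h : l.Sublist L) :
    ∃ x : Fin L.length → Bool,
      ((List.finRange L.length).map (fun i => if x i then L.get i else 1)).prod = l.prod := by
  induction h with
  | slnil => exact ⟨fun _ => false, by simp⟩
  | @cons l L a h ih =>
      obtain ⟨x, hx⟩ := ih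
      refine ⟨Fin.cases false x, ?_⟩
      show ((List.finRange (L.length + 1)).map
        (fun i : Fin (L.length + 1) => if Fin.cases false x i = true then (a :: L).get i else 1)).prod = l.prod
      rw [List.finRange_succ, List.map_cons, List.map_map, List.prod_cons]
      simp [Function.comp_def]
      exact hx
  | @cons_cons l L a h ih =>
      obtain ⟨x, hx⟩ := ih
      refine ⟨Fin.cases true x, ?_⟩
      show ((List.finRange (L.length + 1)).map
        (fun i : Fin (L.length + 1) => if Fin.cases true x i = true then (a :: L).get i else 1)).prod = (a :: l).prod
      rw [List.finRange_succ, List.map_cons, List.map_map, List.prod_cons, List.prod_cons]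
      simp [Function.comp_def]
      exact congrArg (a * ·) hx

lemma key (n : ℕ) (L : List (Fin n)) (hL : L.Pairwise (· < ·)) (σ : Equiv.Perm (Fin n))
    (hσ : ∀ x, x ∉ L → σ x = x) :
    ∃ l : List (Equiv.Perm (Fin n)), l.Sublist (L.flatMap (fun a =>
        ((List.finRange n).filter (fun b => a < b)).map (fun b => Equiv.swap a b)))
      ∧ l.prod = σ := by
  induction L generalizing σ with
  | nil =>
    refine ⟨[], by simp, ?_⟩
    simp only [List.prod_nil]
    exact (Equiv.ext fun x => (hσ x (by simp)).symm)
  | cons a L ih =>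
    set b := σ a with hb
    have hbmem : b = a ∨ b ∈ L := by
      by_contra hc
      push_neg at hc
      have : σ b = b := hσ b (by simp [hc.1, hc.2])
      have := σ.injective (this.trans hb)
      exact hc.1 this
    have hσ' : ∀ x, x ∉ L → (Equiv.swap a b * σ) x = x := by
      intro x hx
      by_cases hxa : x = a
      · subst hxa; simp [hb]
      · have hxnab : x ∉ (a :: L) := by simp [hxa, hx]
        have : σ x = x := hσ x hxnab
        have hxb : x ≠ b := by
          rcases hbmem with h | h
          · rw [h]; exact hxa
          · intro e; exact hx (e ▸ h)
        simp [this, Equiv.swap_apply_of_ne_of_ne hxa hxb]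
    obtain ⟨l', hsub, hprod⟩ := ih hL.of_cons (Equiv.swap a b * σ) hσ'
    rcases hbmem with h | h
    · -- σ a = a, swap is trivial
      have hσeq : σ = Equiv.swap a b * σ := by
        rw [h, Equiv.swap_self]
        ext x; rfl
      refine ⟨l', ?_, by rw [hprod, ← hσeq]⟩
      refine hsub.trans ?_
      rw [List.flatMap_cons]
      exact List.sublist_append_right _ _
    · have hab : a < b := (List.pairwise_cons.mp hL).1 b h
      refine ⟨Equiv.swap a b :: l', ?_, ?_⟩
      · rw [List.flatMap_cons, show Equiv.swap a b :: l' = [Equiv.swap a b] ++ l' from rfl]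
        refine List.Sublist.append ?_ hsub
        rw [List.singleton_sublist]
        exact List.mem_map.mpr ⟨b, List.mem_filter.mpr ⟨List.mem_finRange b, by simpa⟩, rfl⟩
      · rw [List.prod_cons, hprod, ← mul_assoc, Equiv.swap_mul_self, one_mul]

/-- Every permutation of `n` elements is the ordered product `∏_{i=1}^k T_i^{x_i}` of the
lexicographically ordered transpositions, each included (`x i = true`) or omitted. -/
theorem lexSwaps_binary_product_surjective (n : ℕ) (σ : Equiv.Perm (Fin n)) :
    ∃ x : Fin (lexSwaps n).length → Bool,
      σ = (((List.finRange (lexSwaps n).length).map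
        (fun i => if x i then (lexSwaps n).get i else 1)).prod) := by
  obtain ⟨l, hsub, hprod⟩ := key n (List.finRange n) (List.pairwise_lt_finRange n) σ
    (fun x hx => absurd (List.mem_finRange x) hx)
  have hsub' : l.Sublist (lexSwaps n) := hsub
  obtain ⟨x, hx⟩ := mask_of_sublist hsub'
  exact ⟨x, by rw [hx, hprod]⟩
end

section
/- With P and the fixed transposition ordering as above, for every binary vector x^t ∈ {0,1}^k and every x ∈ {0,1}^k, the linearisation P^t(x) := P(x^t) + Σ_i (x_i - x_i^t) ∂P/∂x_i(x^t) is an integer matrix all of whose row sums and column sums equal 1. -/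
open Matrix

private lemma list_prod_mulVec {n : ℕ} (L : List (Matrix (Fin n) (Fin n) ℤ))
    (v : Fin n → ℤ) (h : ∀ M ∈ L, M *ᵥ v = v) : L.prod *ᵥ v = v := by
  induction L with
  | nil => simp [Matrix.one_mulVec]
  | cons a L ih =>
    rw [List.prod_cons, ← Matrix.mulVec_mulVec, ih (fun M hM => h M (by simp [hM])),
      h a (by simp)]

private lemma list_prod_vecMul {n : ℕ} (L : List (Matrix (Fin n) (Fin n) ℤ))
    (v : Fin n → ℤ) (h : ∀ M ∈ L, v ᵥ* M = v) : v ᵥ* L.prod = v := by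
  induction L with
  | nil => simp [Matrix.vecMul_one]
  | cons a L ih =>
    rw [List.prod_cons, ← Matrix.vecMul_vecMul, h a (by simp),
      ih (fun M hM => h M (by simp [hM]))]

private lemma vecMul_smul' {n : ℕ} (a : ℤ) (M : Matrix (Fin n) (Fin n) ℤ) (v : Fin n → ℤ) :
    v ᵥ* (a • M) = a • (v ᵥ* M) := by
  funext c
  simp [Matrix.vecMul, dotProduct, Finset.mul_sum, mul_left_comm]

private lemma sum_mulVec' {n : ℕ} {ι : Type*} (s : Finset ι)
    (f : ι → Matrix (Fin n) (Fin n) ℤ) (v : Fin n → ℤ) :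
    (∑ i ∈ s, f i) *ᵥ v = ∑ i ∈ s, f i *ᵥ v := by
  induction s using Finset.cons_induction with
  | empty => simp [Matrix.zero_mulVec]
  | cons a s ha ih => simp [Matrix.add_mulVec, ih]

private lemma sum_vecMul' {n : ℕ} {ι : Type*} (s : Finset ι)
    (f : ι → Matrix (Fin n) (Fin n) ℤ) (v : Fin n → ℤ) :
    v ᵥ* (∑ i ∈ s, f i) = ∑ i ∈ s, v ᵥ* f i := by
  induction s using Finset.cons_induction with
  | empty => simp [Matrix.vecMul_zero]
  | cons a s ha ih => simp [Matrix.vecMul_add, ih]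

/-- With `P(x) = ∏_{i=1}^k (I + x_i(T_i - I))` for the fixed ordering of the `k = n(n-1)/2`
transposition matrices, for all binary `x^t, x ∈ {0,1}^k` the linearisation
`P^t(x) = P(x^t) + Σ_i (x_i - x_i^t) ∂P/∂x_i(x^t)` is an integer matrix all of whose
row sums and column sums equal `1`. -/
theorem linearised_perm_row_col_sums_one (n k : ℕ) (hk : k = n * (n - 1) / 2)
    (τ : Fin k → Equiv.Perm (Fin n)) (hswap : ∀ i, (τ i).IsSwap)
    (hinj : Function.Injective τ)
    (T : Fin k → Matrix (Fin n) (Fin n) ℤ)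
    (hT : ∀ i, T i = Matrix.of fun r c => if τ i c = r then (1 : ℤ) else 0)
    (xt x : Fin k → ℤ) (hxt : ∀ i, xt i = 0 ∨ xt i = 1) (hx : ∀ i, x i = 0 ∨ x i = 1)
    (P : Matrix (Fin n) (Fin n) ℤ)
    (hP : P = (((List.finRange k).map fun i => 1 + xt i • (T i - 1)).prod))
    (D : Fin k → Matrix (Fin n) (Fin n) ℤ)
    (hD : ∀ i, D i =
      ((((List.finRange k).filter fun j => j < i).map fun j => 1 + xt j • (T j - 1)).prod) *
        (T i - 1) *
      ((((List.finRange k).filter fun j => i < j).map fun j => 1 + xt j • (T j - 1)).prod))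
    (Pt : Matrix (Fin n) (Fin n) ℤ)
    (hPt : Pt = P + ∑ i : Fin k, (x i - xt i) • D i) :
    (∀ r, ∑ c, Pt r c = 1) ∧ (∀ c, ∑ r, Pt r c = 1) := by
  set ones : Fin n → ℤ := fun _ => 1 with hones
  -- T i preserves ones on both sides
  have hTmv : ∀ i, T i *ᵥ ones = ones := by
    intro i
    funext r
    simp only [hT, Matrix.mulVec, dotProduct, hones, mul_one, Matrix.of_apply]
    rw [Fintype.sum_equiv (τ i) _ (fun y => if y = r then (1:ℤ) else 0) (fun c => rfl)]
    simp
  have hTvm : ∀ i, ones ᵥ* T i = ones := by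
    intro i
    funext c
    simp [hT, Matrix.vecMul, dotProduct, hones]
  -- each factor preserves ones
  have hfac_mv : ∀ i, (1 + xt i • (T i - 1)) *ᵥ ones = ones := by
    intro i
    rw [Matrix.add_mulVec, Matrix.one_mulVec, Matrix.smul_mulVec, Matrix.sub_mulVec,
      Matrix.one_mulVec, hTmv]
    simp
  have hfac_vm : ∀ i, ones ᵥ* (1 + xt i • (T i - 1)) = ones := by
    intro i
    rw [Matrix.vecMul_add, Matrix.vecMul_one, vecMul_smul', Matrix.vecMul_sub,
      Matrix.vecMul_one, hTvm]
    simp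
  have hTsub_mv : ∀ i, (T i - 1) *ᵥ ones = 0 := by
    intro i
    rw [Matrix.sub_mulVec, Matrix.one_mulVec, hTmv, sub_self]
  have hTsub_vm : ∀ i, ones ᵥ* (T i - 1) = 0 := by
    intro i
    rw [Matrix.vecMul_sub, Matrix.vecMul_one, hTvm, sub_self]
  have hlist_mv : ∀ (L : List (Fin k)), ((L.map fun j => 1 + xt j • (T j - 1)).prod) *ᵥ ones
      = ones := by
    intro L
    refine list_prod_mulVec _ _ ?_
    intro M hM
    simp only [List.mem_map] at hM
    obtain ⟨j, _, rfl⟩ := hM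
    exact hfac_mv j
  have hlist_vm : ∀ (L : List (Fin k)), ones ᵥ* ((L.map fun j => 1 + xt j • (T j - 1)).prod)
      = ones := by
    intro L
    refine list_prod_vecMul _ _ ?_
    intro M hM
    simp only [List.mem_map] at hM
    obtain ⟨j, _, rfl⟩ := hM
    exact hfac_vm j
  have hD_mv : ∀ i, D i *ᵥ ones = 0 := by
    intro i
    rw [hD i, ← Matrix.mulVec_mulVec, ← Matrix.mulVec_mulVec, hlist_mv, hTsub_mv,
      Matrix.mulVec_zero]
  have hD_vm : ∀ i, ones ᵥ* D i = 0 := by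
    intro i
    rw [hD i, ← Matrix.vecMul_vecMul, ← Matrix.vecMul_vecMul, hlist_vm, hTsub_vm,
      Matrix.zero_vecMul]
  have hPt_mv : Pt *ᵥ ones = ones := by
    rw [hPt, Matrix.add_mulVec, hP, hlist_mv, sum_mulVec']
    have : ∀ i ∈ Finset.univ, ((x i - xt i) • D i) *ᵥ ones = 0 := by
      intro i _
      rw [Matrix.smul_mulVec, hD_mv, smul_zero]
    rw [Finset.sum_congr rfl this]
    simp
  have hPt_vm : ones ᵥ* Pt = ones := by
    rw [hPt, Matrix.vecMul_add, hP, hlist_vm, sum_vecMul']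
    have : ∀ i ∈ Finset.univ, ones ᵥ* ((x i - xt i) • D i) = 0 := by
      intro i _
      rw [vecMul_smul', hD_vm, smul_zero]
    rw [Finset.sum_congr rfl this]
    simp
  constructor
  · intro r
    have := congrFun hPt_mv r
    simpa [Matrix.mulVec, dotProduct, hones] using this
  · intro c
    have := congrFun hPt_vm c
    simpa [Matrix.vecMul, dotProduct, hones] using this
end

section
/- If M is an n×n integer matrix whose rows and columns each sum to 1, then the squared Frobenius norm of M is at least n, with equality if and only if M is a permutation matrix. -/
open Matrix

lemma int_le_sq (x : ℤ) : x ≤ x ^ 2 := by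
  rcases le_or_gt x 0 with h | h
  · exact h.trans (sq_nonneg x)
  · have h1 : 1 ≤ x := h
    calc x = x * 1 := (mul_one x).symm
    _ ≤ x * x := by exact mul_le_mul_of_nonneg_left h1 (le_of_lt h)
    _ = x ^ 2 := (sq x).symm

lemma aux_unique {n : ℕ} (f : Fin n → ℤ) (h01 : ∀ i, f i = 0 ∨ f i = 1)
    (hs : ∑ i, f i = 1) : ∃! i, f i = 1 := by
  classical
  have h1 : ∑ i, f i = ∑ i ∈ Finset.univ.filter (fun i => f i = 1), f i := by
    rw [Finset.sum_filter_of_ne]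
    intro i _ hne
    rcases h01 i with h | h
    · exact absurd h hne
    · exact h
  have h2 : ∑ i ∈ Finset.univ.filter (fun i => f i = 1), f i
      = (Finset.univ.filter (fun i => f i = 1)).card := by
    rw [Finset.sum_congr rfl (fun i hi => (Finset.mem_filter.mp hi).2)]
    simp
  have hcard : (Finset.univ.filter (fun i => f i = 1)).card = 1 := by
    have : (1:ℤ) = _ := hs ▸ h1
    rw [h2] at this
    exact_mod_cast this.symm
  obtain ⟨a, ha⟩ := Finset.card_eq_one.mp hcard
  refine ⟨a, ?_, ?_⟩
  · have : a ∈ Finset.univ.filter (fun i => f i = 1) := ha ▸ Finset.mem_singleton_self a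
    exact (Finset.mem_filter.mp this).2
  · intro b hb
    have : b ∈ Finset.univ.filter (fun i => f i = 1) := Finset.mem_filter.mpr ⟨Finset.mem_univ b, hb⟩
    rw [ha] at this
    exact Finset.mem_singleton.mp this

/-- If `M` is an `n×n` integer matrix whose rows and columns each sum to `1`, then
`‖M‖_F² = Σ_{ij} M_{ij}² ≥ n`, with equality if and only if `M` is a permutation matrix. -/
theorem frobenius_sq_ge_of_doubly_sum_one (n : ℕ) (M : Matrix (Fin n) (Fin n) ℤ)
    (hrow : ∀ i, ∑ j, M i j = 1) (hcol : ∀ j, ∑ i, M i j = 1) :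
    (n : ℤ) ≤ ∑ i, ∑ j, (M i j) ^ 2 ∧
    ((∑ i, ∑ j, (M i j) ^ 2 = (n : ℤ)) ↔
      ∃ σ : Equiv.Perm (Fin n), M = Matrix.of fun i j => if σ j = i then (1 : ℤ) else 0) := by
  classical
  have hsum : ∑ i, ∑ j, M i j = (n : ℤ) := by simp [hrow]
  have hge : (n : ℤ) ≤ ∑ i, ∑ j, (M i j) ^ 2 := by
    rw [← hsum]
    exact Finset.sum_le_sum fun i _ => Finset.sum_le_sum fun j _ => int_le_sq (M i j)
  refine ⟨hge, ?_, ?_⟩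
  · intro heq
    -- termwise equality: each M i j ^ 2 = M i j
    have hzero : ∑ i, ∑ j, ((M i j) ^ 2 - M i j) = 0 := by
      rw [Finset.sum_congr rfl fun i _ => Finset.sum_sub_distrib (fun j => (M i j) ^ 2) (fun j => M i j), Finset.sum_sub_distrib,
        heq, hsum, sub_self]
    have hterm : ∀ i j, (M i j) ^ 2 = M i j := by
      intro i j
      have h1 := (Finset.sum_eq_zero_iff_of_nonneg
        (fun i _ => Finset.sum_nonneg fun j _ => sub_nonneg.mpr (int_le_sq (M i j)))).mp hzero
        i (Finset.mem_univ i)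
      have h2 := (Finset.sum_eq_zero_iff_of_nonneg
        (fun j _ => sub_nonneg.mpr (int_le_sq (M i j)))).mp h1 j (Finset.mem_univ j)
      linarith
    have h01 : ∀ i j, M i j = 0 ∨ M i j = 1 := by
      intro i j
      have : M i j * (M i j - 1) = 0 := by have := hterm i j; ring_nf; nlinarith
      rcases mul_eq_zero.mp this with h | h
      · exact Or.inl h
      · exact Or.inr (by linarith)
    -- for each column j, unique row
    have hcolU : ∀ j, ∃! i, M i j = 1 := fun j =>
      aux_unique (fun i => M i j) (fun i => h01 i j) (hcol j)
    have hrowU : ∀ i, ∃! j, M i j = 1 := fun i =>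
      aux_unique (fun j => M i j) (fun j => h01 i j) (hrow i)
    choose g hg hgU using hcolU
    have hinj : Function.Injective g := by
      intro j1 j2 h
      obtain ⟨_, _, hu⟩ := hrowU (g j1)
      have h1 : j1 = _ := hu j1 (hg j1)
      have h2 : j2 = _ := hu j2 (h ▸ hg j2)
      rw [h1, h2]
    let σ : Equiv.Perm (Fin n) := Equiv.ofBijective g (Finite.injective_iff_bijective.mp hinj)
    refine ⟨σ, ?_⟩
    ext i j
    show M i j = if σ j = i then 1 else 0
    have hσ : σ j = g j := rfl
    by_cases h : σ j = i
    · rw [if_pos h]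
      rw [hσ] at h
      exact h ▸ hg j
    · rw [if_neg h]
      rcases h01 i j with h0 | h1
      · exact h0
      · exact absurd ((hgU j i h1).symm ▸ hσ.symm : σ j = i) h
  · rintro ⟨σ, rfl⟩
    rw [Finset.sum_comm]
    have : ∀ j, ∑ i, ((Matrix.of fun i j => if σ j = i then (1 : ℤ) else 0) i j) ^ 2 = 1 := by
      intro j
      simp [Matrix.of_apply, apply_ite (fun x : ℤ => x ^ 2), Finset.sum_ite_eq]
    rw [Finset.sum_congr rfl fun j _ => this j]
    simp
end
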